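/- Let 𝒣 and 𝒢 be real Hilbert spaces, let L : 𝒣 → 𝒢 be a bounded linear operator, let φ ∈ Γ₀(𝒢), let r ∈ 𝒢, u ∈ 𝒣, ρ ∈ ℝ, and define f : 𝒣 → (-∞, +∞] by f(x) = (⟨x, u⟩ − ρ) φ((Lx − r)/(⟨x, u⟩ − ρ)) if ⟨x, u⟩ > ρ; f(x) = (rec φ)(Lx − r) if ⟨x, u⟩ = ρ; f(x) = +∞ if ⟨x, u⟩ < ρ. Suppose there exists z ∈ 𝒣 with Lz ∈ r + (⟨z, u⟩ − ρ)·dom φ and ⟨z, u⟩ ≥ ρ, and set A : 𝒣 → ℝ ⊕ 𝒢, A(x) = (⟨x, u⟩ − ρ, Lx − r). Then f = φ̃ ∘ A and f ∈ Γ₀(𝒣). -/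

import Mathlib

open scoped RealInnerProductSpace Classical

noncomputable section

/-- Properness for extended-real-valued functions. -/
def IsProperE {G : Type*} (f : G → EReal) : Prop :=
  (∀ x, f x ≠ ⊥) ∧ ∃ x, f x ≠ ⊤

/-- Convexity for extended-real-valued functions. -/
def ConvexE (G : Type*) [AddCommGroup G] [Module ℝ G] (f : G → EReal) : Prop :=
  ∀ x y : G, ∀ a b : ℝ, 0 ≤ a → 0 ≤ b → a + b = 1 →
    f (a • x + b • y) ≤ (a : EReal) * f x + (b : EReal) * f y

/-- The class Γ₀: proper, lower semicontinuous, convex. -/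
def Gamma0 (G : Type*) [AddCommGroup G] [Module ℝ G] [TopologicalSpace G]
    (f : G → EReal) : Prop :=
  IsProperE f ∧ LowerSemicontinuous f ∧ ConvexE G f

/-- The recession function. -/
def recFn {G : Type*} [AddCommGroup G] (f : G → EReal) (y : G) : EReal :=
  ⨆ x : {x : G // f x ≠ ⊤}, (f ((x : G) + y) - f (x : G))

/-- The perspective function. -/
def persp {G : Type*} [AddCommGroup G] [Module ℝ G] (f : G → EReal) : ℝ × G → EReal :=
  fun p => if 0 < p.1 then (p.1 : EReal) * f (p.1⁻¹ • p.2)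
           else if p.1 = 0 then recFn f p.2 else ⊤

/-- The Fenchel conjugate. -/
def conjFn {G : Type*} [NormedAddCommGroup G] [InnerProductSpace ℝ G]
    (f : G → EReal) (u : G) : EReal :=
  ⨆ x : G, (((inner ℝ x u : ℝ) : EReal) - f x)

/-- The support function of a set. -/
def suppFn {G : Type*} [NormedAddCommGroup G] [InnerProductSpace ℝ G]
    (D : Set G) (y : G) : EReal :=
  ⨆ u ∈ D, ((inner ℝ y u : ℝ) : EReal)

/-- The convex subdifferential. -/
def subdiff {G : Type*} [NormedAddCommGroup G] [InnerProductSpace ℝ G]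
    (f : G → EReal) (x : G) : Set G :=
  {u | ∀ z : G, (((inner ℝ (z - x) u : ℝ) : EReal) + f x ≤ f z)}



section PerspectiveAuxiliary

open Filter Topology

namespace PerspAux

set_option linter.unusedSectionVars false
set_option linter.unusedVariables false

lemma toReal_eq {X : EReal} (ht : X ≠ ⊤) (hb : X ≠ ⊥) : ∃ w : ℝ, X = (w : EReal) :=
  ⟨X.toReal, (EReal.coe_toReal ht hb).symm⟩

lemma ereal_mul_ne_bot {c : ℝ} (hc : 0 ≤ c) {X : EReal} (hX : X ≠ ⊥) : (c : EReal) * X ≠ ⊥ := by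
  induction X with
  | bot => exact absurd rfl hX
  | coe x => rw [← EReal.coe_mul]; exact EReal.coe_ne_bot _
  | top =>
    rcases hc.eq_or_lt with rfl | hc'
    · simp
    · rw [EReal.coe_mul_top_of_pos hc']; simp

lemma ereal_coe_mul_coe_mul (c d : ℝ) (X : EReal) :
    (c : EReal) * ((d : EReal) * X) = ((c * d : ℝ) : EReal) * X := by
  rw [← mul_assoc, ← EReal.coe_mul]

lemma ereal_mul_add {s : ℝ} (hs : 0 ≤ s) {X Y : EReal} (hX : X ≠ ⊥) (hY : Y ≠ ⊥) :
    (s : EReal) * (X + Y) = (s : EReal) * X + (s : EReal) * Y := by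
  rcases hs.eq_or_lt with rfl | hs'
  · simp
  induction X with
  | bot => exact absurd rfl hX
  | coe x =>
    induction Y with
    | bot => exact absurd rfl hY
    | coe y => norm_cast; ring
    | top =>
      rw [EReal.add_top_of_ne_bot (EReal.coe_ne_bot x), EReal.coe_mul_top_of_pos hs',
        ← EReal.coe_mul, EReal.add_top_of_ne_bot (EReal.coe_ne_bot _)]
  | top =>
    rw [EReal.top_add_of_ne_bot hY, EReal.coe_mul_top_of_pos hs',
      EReal.top_add_of_ne_bot (ereal_mul_ne_bot hs'.le hY)]



section Grp

variable {E : Type*} [AddCommGroup E] [Module ℝ E] {φ : E → EReal}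

lemma sub_le_recFn {x : E} (hx : φ x ≠ ⊤) (y : E) : φ (x + y) - φ x ≤ recFn φ y :=
  le_iSup (fun x : {x : E // φ x ≠ ⊤} => φ ((x : E) + y) - φ (x : E)) ⟨x, hx⟩

lemma recFn_ne_bot (hb : ∀ x, φ x ≠ ⊥) (hs : ∃ x, φ x ≠ ⊤) (y : E) : recFn φ y ≠ ⊥ := by
  obtain ⟨x₀, hx₀⟩ := hs
  have h1 := sub_le_recFn hx₀ y
  intro h
  rw [h, le_bot_iff] at h1
  obtain ⟨w, hw⟩ := toReal_eq hx₀ (hb x₀)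
  rw [hw, sub_eq_add_neg, ← EReal.coe_neg, EReal.add_eq_bot_iff] at h1
  rcases h1 with h1 | h1
  · exact hb _ h1
  · exact EReal.coe_ne_bot _ h1

lemma recFn_zero (hb : ∀ x, φ x ≠ ⊥) (hs : ∃ x, φ x ≠ ⊤) : recFn φ (0 : E) = 0 := by
  obtain ⟨x₀, hx₀⟩ := hs
  haveI : Nonempty {x : E // φ x ≠ ⊤} := ⟨⟨x₀, hx₀⟩⟩
  have h : ∀ x : {x : E // φ x ≠ ⊤}, φ ((x : E) + 0) - φ (x : E) = 0 := by
    rintro ⟨x, hx⟩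
    obtain ⟨w, hw⟩ := toReal_eq hx (hb x)
    simp only [add_zero, hw, ← EReal.coe_sub, sub_self, EReal.coe_zero]
  rw [recFn, iSup_congr h, iSup_const]

lemma le_add_recFn (hb : ∀ x, φ x ≠ ⊥) {x : E} (hx : φ x ≠ ⊤) (y : E) :
    φ (x + y) ≤ φ x + recFn φ y := by
  obtain ⟨w, hw⟩ := toReal_eq hx (hb x)
  have h := sub_le_recFn hx y
  rw [hw] at h ⊢
  exact ((EReal.sub_le_iff_le_add (.inl (EReal.coe_ne_bot w)) (.inl (EReal.coe_ne_top w))).1 h).trans_eq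
    (add_comm _ _)

lemma le_add_nsmul_recFn (hb : ∀ x, φ x ≠ ⊥) {x : E} (hx : φ x ≠ ⊤) (y : E) (n : ℕ) :
    φ (x + (n : ℝ) • y) ≤ φ x + ((n : ℝ) : EReal) * recFn φ y := by
  induction n with
  | zero => simp
  | succ n ih =>
    by_cases htop : φ (x + (n : ℝ) • y) = ⊤
    · have hR : recFn φ y = ⊤ := by
        by_contra hR
        obtain ⟨w, hw⟩ := toReal_eq hx (hb x)
        obtain ⟨R, hRe⟩ := toReal_eq hR (recFn_ne_bot hb ⟨x, hx⟩ y)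
        rw [htop, hw, hRe, ← EReal.coe_mul, ← EReal.coe_add, top_le_iff] at ih
        exact EReal.coe_ne_top _ ih
      rw [hR, EReal.coe_mul_top_of_pos (by positivity), EReal.add_top_of_ne_bot (hb x)]
      exact le_top
    · have h2 : x + ((n + 1 : ℕ) : ℝ) • y = (x + (n : ℝ) • y) + y := by
        push_cast
        rw [add_smul, one_smul, add_assoc]
      have h3 := le_add_recFn hb htop y
      rw [h2]
      refine h3.trans ((add_le_add_left ih _).trans (le_of_eq ?_))
      rw [add_assoc]
      congr 1
      have hco : (((n + 1 : ℕ) : ℝ) : EReal) = ((n : ℝ) : EReal) + ((1 : ℝ) : EReal) := by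
        push_cast; rfl
      rw [hco, EReal.right_distrib_of_nonneg (EReal.coe_nonneg.2 (Nat.cast_nonneg n))
        (EReal.coe_nonneg.2 zero_le_one), EReal.coe_one, one_mul]

lemma recFn_smul_le (hb : ∀ x, φ x ≠ ⊥) (hs : ∃ x, φ x ≠ ⊤) (hconv : ConvexE E φ)
    {c : ℝ} (hc : 0 < c) (y : E) :
    recFn φ (c • y) ≤ (c : EReal) * recFn φ y := by
  refine iSup_le ?_
  rintro ⟨x, hx⟩
  by_cases hR : recFn φ y = ⊤
  · rw [hR, EReal.coe_mul_top_of_pos (by exact_mod_cast hc)]; exact le_top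
  obtain ⟨R, hRe⟩ := toReal_eq hR (recFn_ne_bot hb hs y)
  obtain ⟨w, hw⟩ := toReal_eq hx (hb x)
  set n : ℕ := max 1 ⌈c⌉₊ with hn
  have hn1 : c ≤ (n : ℝ) := le_trans (Nat.le_ceil c) (by exact_mod_cast Nat.le_max_right 1 ⌈c⌉₊)
  have hnpos : (0 : ℝ) < (n : ℝ) := by
    have : 1 ≤ n := Nat.le_max_left _ _
    exact_mod_cast Nat.lt_of_lt_of_le Nat.zero_lt_one this
  have hv : φ (x + (n : ℝ) • y) ≤ ((w + n * R : ℝ) : EReal) := by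
    have h := le_add_nsmul_recFn hb hx y n
    rw [hw, hRe, ← EReal.coe_mul, ← EReal.coe_add] at h
    exact h
  have hvt : φ (x + (n : ℝ) • y) ≠ ⊤ := fun h => by
    rw [h, top_le_iff] at hv; exact EReal.coe_ne_top _ hv
  obtain ⟨v, hve⟩ := toReal_eq hvt (hb _)
  have hvle : v ≤ w + n * R := by rw [hve] at hv; exact_mod_cast hv
  have hcn : (c / n) * (n : ℝ) = c := div_mul_cancel₀ c hnpos.ne'
  have hcomb := hconv x (x + (n : ℝ) • y) (1 - c / n) (c / n)
    (by rw [sub_nonneg]; exact div_le_one_of_le₀ hn1 hnpos.le)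
    (by positivity) (by ring)
  have hvec : (1 - c / n) • x + (c / n) • (x + (n : ℝ) • y) = x + c • y := by
    rw [smul_add, smul_smul, hcn, ← add_assoc, ← add_smul, sub_add_cancel, one_smul]
  rw [hvec, hw, hve] at hcomb
  have hreal : φ (x + c • y) ≤ (((1 - c / n) * w + (c / n) * v : ℝ) : EReal) := by
    rw [EReal.coe_add, EReal.coe_mul, EReal.coe_mul]; exact hcomb
  rw [hw, hRe, ← EReal.coe_mul]
  refine (EReal.sub_le_iff_le_add (.inl (EReal.coe_ne_bot w)) (.inl (EReal.coe_ne_top w))).2 ?_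
  refine hreal.trans ?_
  rw [← EReal.coe_add, EReal.coe_le_coe_iff]
  have h4 : (c / n) * v ≤ (c / n) * (w + n * R) :=
    mul_le_mul_of_nonneg_left hvle (by positivity)
  have h5 : (c / n) * (w + n * R) = (c / n) * w + c * R := by rw [mul_add, ← mul_assoc, hcn]
  have h6 : (1 - c / n) * w = w - (c / n) * w := by ring
  linarith [h4, h5, h6]

lemma recFn_add_le (hb : ∀ x, φ x ≠ ⊥) (hs : ∃ x, φ x ≠ ⊤) (y z : E) :
    recFn φ (y + z) ≤ recFn φ y + recFn φ z := by
  refine iSup_le ?_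
  rintro ⟨x, hx⟩
  obtain ⟨w, hw⟩ := toReal_eq hx (hb x)
  by_cases h1 : φ (x + y) = ⊤
  · have htop : recFn φ y = ⊤ := by
      have := sub_le_recFn hx y
      rw [h1, hw, EReal.top_sub_coe, top_le_iff] at this
      exact this
    rw [htop, EReal.top_add_of_ne_bot (recFn_ne_bot hb hs z)]
    exact le_top
  · have h2 := le_add_recFn hb h1 z
    have h3 := le_add_recFn hb hx y
    have h4 : φ (x + (y + z)) ≤ (φ x + recFn φ y) + recFn φ z := by
      rw [← add_assoc]
      exact h2.trans (add_le_add_left h3 _)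
    rw [hw] at h4 ⊢
    refine (EReal.sub_le_iff_le_add (.inl (EReal.coe_ne_bot w)) (.inl (EReal.coe_ne_top w))).2 ?_
    refine h4.trans (le_of_eq ?_)
    rw [add_comm ((w : EReal)) (recFn φ y), add_assoc, add_comm ((w : EReal)) (recFn φ z),
      ← add_assoc]


lemma persp_pos {p : ℝ × E} (hp : 0 < p.1) :
    persp φ p = (p.1 : EReal) * φ (p.1⁻¹ • p.2) := if_pos hp

lemma persp_zero {p : ℝ × E} (hp : p.1 = 0) : persp φ p = recFn φ p.2 := by
  rw [persp, if_neg (by rw [hp]; exact lt_irrefl 0), if_pos hp]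

lemma persp_neg {p : ℝ × E} (hp : p.1 < 0) : persp φ p = ⊤ := by
  rw [persp, if_neg (asymm hp), if_neg hp.ne]

lemma persp_ne_bot (hb : ∀ x, φ x ≠ ⊥) (hs : ∃ x, φ x ≠ ⊤) (p : ℝ × E) : persp φ p ≠ ⊥ := by
  rcases lt_trichotomy p.1 0 with h | h | h
  · rw [persp_neg h]; simp
  · rw [persp_zero h]; exact recFn_ne_bot hb hs _
  · rw [persp_pos h]; exact ereal_mul_ne_bot h.le (hb _)

lemma persp_combo_fst (p q : ℝ × E) (a b : ℝ) : (a • p + b • q).1 = a * p.1 + b * q.1 := rfl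
lemma persp_combo_snd (p q : ℝ × E) (a b : ℝ) : (a • p + b • q).2 = a • p.2 + b • q.2 := rfl

/-- mixed case: `p.1 = 0 < q.1`. -/
lemma persp_convex_mixed (hb : ∀ x, φ x ≠ ⊥) (hs : ∃ x, φ x ≠ ⊤) (hconv : ConvexE E φ)
    {a b : ℝ} (hA : 0 < a) (hB : 0 < b) {p q : ℝ × E} (hp0 : p.1 = 0) (hq : 0 < q.1) :
    persp φ (a • p + b • q) ≤ (a : EReal) * persp φ p + (b : EReal) * persp φ q := by
  set s : ℝ := b * q.1 with hsdef
  have hspos : 0 < s := mul_pos hB hq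
  have hc1 : (a • p + b • q).1 = s := by rw [persp_combo_fst, hp0, mul_zero, zero_add]
  set v := q.1⁻¹ • q.2 with hvdef
  rw [persp_pos (by rw [hc1]; exact hspos), persp_zero hp0, persp_pos hq, hc1, persp_combo_snd]
  by_cases hv : φ v = ⊤
  · rw [hv, EReal.coe_mul_top_of_pos hq, EReal.coe_mul_top_of_pos hB,
      EReal.add_top_of_ne_bot (ereal_mul_ne_bot hA.le (recFn_ne_bot hb hs p.2))]
    exact le_top
  have hvec : s⁻¹ • (a • p.2 + b • q.2) = v + (a / s) • p.2 := by
    rw [smul_add, smul_smul, smul_smul, hvdef]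
    have e1 : s⁻¹ * b = q.1⁻¹ := by
      rw [hsdef, mul_inv]
      field_simp
    have e2 : s⁻¹ * a = a / s := by rw [inv_mul_eq_div]
    rw [e1, e2, add_comm]
  have key : φ (s⁻¹ • (a • p.2 + b • q.2)) ≤ φ v + ((a / s : ℝ) : EReal) * recFn φ p.2 := by
    rw [hvec]
    exact (le_add_recFn hb hv _).trans
      (add_le_add_right (recFn_smul_le hb hs hconv (div_pos hA hspos) p.2) _)
  obtain ⟨vv, hvv⟩ := toReal_eq hv (hb v)
  have hmul := mul_le_mul_of_nonneg_left key (EReal.coe_nonneg.2 hspos.le)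
  refine hmul.trans (le_of_eq ?_)
  rw [ereal_mul_add hspos.le (hvv ▸ EReal.coe_ne_bot vv)
      (ereal_mul_ne_bot (div_nonneg hA.le hspos.le) (recFn_ne_bot hb hs p.2)),
    ereal_coe_mul_coe_mul s (a / s), ereal_coe_mul_coe_mul b q.1,
    mul_div_cancel₀ a hspos.ne', add_comm]

lemma persp_convex (hb : ∀ x, φ x ≠ ⊥) (hs : ∃ x, φ x ≠ ⊤) (hconv : ConvexE E φ) :
    ConvexE (ℝ × E) (persp φ) := by
  intro p q a b ha hb' hab
  rcases ha.eq_or_lt with rfl | hA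
  · have hb1 : b = 1 := by linarith
    subst hb1
    simp only [zero_smul, zero_add, one_smul, EReal.coe_zero, zero_mul, EReal.coe_one, one_mul]
    exact le_rfl
  rcases hb'.eq_or_lt with rfl | hB
  · have ha1 : a = 1 := by linarith
    subst ha1
    simp only [zero_smul, add_zero, one_smul, EReal.coe_zero, zero_mul, EReal.coe_one, one_mul]
    exact le_rfl
  by_cases hp : p.1 < 0
  · rw [persp_neg hp, EReal.coe_mul_top_of_pos hA,
      EReal.top_add_of_ne_bot (ereal_mul_ne_bot hB.le (persp_ne_bot hb hs q))]
    exact le_top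
  by_cases hq : q.1 < 0
  · rw [persp_neg hq, EReal.coe_mul_top_of_pos hB,
      EReal.add_top_of_ne_bot (ereal_mul_ne_bot hA.le (persp_ne_bot hb hs p))]
    exact le_top
  push_neg at hp hq
  rcases hp.eq_or_lt with hp0 | hppos
  · rcases hq.eq_or_lt with hq0 | hqpos
    · -- both zero
      rw [persp_zero hp0.symm, persp_zero hq0.symm,
        persp_zero (by rw [persp_combo_fst, ← hp0, ← hq0, mul_zero, mul_zero, add_zero]),
        persp_combo_snd]
      calc recFn φ (a • p.2 + b • q.2)
          ≤ recFn φ (a • p.2) + recFn φ (b • q.2) := recFn_add_le hb hs _ _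
        _ ≤ (a : EReal) * recFn φ p.2 + (b : EReal) * recFn φ q.2 :=
            add_le_add (recFn_smul_le hb hs hconv hA _) (recFn_smul_le hb hs hconv hB _)
    · exact persp_convex_mixed hb hs hconv hA hB hp0.symm hqpos
  · rcases hq.eq_or_lt with hq0 | hqpos
    · have h := persp_convex_mixed hb hs hconv hB hA hq0.symm hppos
      rw [add_comm (b • q) (a • p), add_comm ((b : EReal) * persp φ q)] at h
      exact h
    · -- both positive
      set s : ℝ := a * p.1 + b * q.1 with hsdef
      have hspos : 0 < s := by positivity
      set v1 := p.1⁻¹ • p.2 with hv1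
      set v2 := q.1⁻¹ • q.2 with hv2
      rw [persp_pos (by rw [persp_combo_fst]; exact hspos), persp_pos hppos, persp_pos hqpos,
        persp_combo_fst, persp_combo_snd]
      have hvec : s⁻¹ • (a • p.2 + b • q.2)
          = ((a * p.1) / s) • v1 + ((b * q.1) / s) • v2 := by
        rw [smul_add, smul_smul, smul_smul, hv1, hv2, smul_smul, smul_smul]
        congr 2
        · field_simp
        · field_simp
      have hcomb := hconv v1 v2 ((a * p.1) / s) ((b * q.1) / s)
        (by positivity) (by positivity)
        (by rw [← add_div, hsdef, div_self hspos.ne'])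
      rw [← hvec] at hcomb
      have hmul := mul_le_mul_of_nonneg_left hcomb (EReal.coe_nonneg.2 hspos.le)
      refine hmul.trans (le_of_eq ?_)
      rw [ereal_mul_add hspos.le
          (ereal_mul_ne_bot (by positivity) (hb v1)) (ereal_mul_ne_bot (by positivity) (hb v2)),
        ereal_coe_mul_coe_mul s ((a * p.1) / s), ereal_coe_mul_coe_mul s ((b * q.1) / s),
        mul_div_cancel₀ _ hspos.ne', mul_div_cancel₀ _ hspos.ne',
        ereal_coe_mul_coe_mul a p.1, ereal_coe_mul_coe_mul b q.1]


end Grp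

lemma exists_real_pair {η : ℝ} (hη : 0 < η) {X : EReal} {c' : ℝ}
    (h : (c' : EReal) < (η : EReal) * X) : ∃ M : ℝ, (M : EReal) < X ∧ c' < η * M := by
  induction X with
  | bot => rw [EReal.coe_mul_bot_of_pos hη] at h; exact absurd h (not_lt_bot)
  | coe x =>
    rw [← EReal.coe_mul, EReal.coe_lt_coe_iff] at h
    have hcx : c' / η < x := by rw [div_lt_iff₀ hη]; linarith [h]
    refine ⟨(c' / η + x) / 2, by exact_mod_cast (by linarith : (c' / η + x) / 2 < x), ?_⟩
    have h2 : c' / η < (c' / η + x) / 2 := by linarith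
    have h3 := mul_lt_mul_of_pos_left h2 hη
    rwa [mul_div_cancel₀ c' hη.ne'] at h3
  | top =>
    refine ⟨c' / η + 1, EReal.coe_lt_top _, ?_⟩
    have : η * (c' / η + 1) = c' + η := by
      rw [mul_add, mul_div_cancel₀ c' hη.ne', mul_one]
    rw [this]; linarith



section LSC

variable {E : Type*} [NormedAddCommGroup E] [NormedSpace ℝ E] {φ : E → EReal}

lemma persp_lsc (hb : ∀ x, φ x ≠ ⊥) (hs : ∃ x, φ x ≠ ⊤)
    (hlsc : LowerSemicontinuous φ) (hconv : ConvexE E φ) :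
    LowerSemicontinuous (persp φ) := by
  intro p c hc
  rcases lt_trichotomy p.1 0 with hp | hp | hp
  · -- negative region : persp = ⊤ on an open set
    rw [persp_neg hp] at hc
    have hev : ∀ᶠ q : ℝ × E in 𝓝 p, q.1 < 0 :=
      (isOpen_lt continuous_fst continuous_const).eventually_mem hp
    filter_upwards [hev] with q hq
    rw [persp_neg hq]; exact hc
  · -- boundary
    rw [persp_zero hp] at hc
    obtain ⟨c', hc'1, hc'2⟩ := EReal.exists_between_coe_real hc
    obtain ⟨⟨x, hx⟩, hxlt⟩ := lt_iSup_iff.1 hc'2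
    obtain ⟨w, hw⟩ := toReal_eq hx (hb x)
    rw [hw] at hxlt
    have hkey : ((c' + w : ℝ) : EReal) < φ (x + p.2) := by
      have := (EReal.lt_sub_iff_add_lt (.inl (EReal.coe_ne_bot w))
        (.inl (EReal.coe_ne_top w))).1 hxlt
      rwa [← EReal.coe_add] at this
    obtain ⟨M, hM1, hM2⟩ := EReal.exists_between_coe_real hkey
    have hM1' : c' + w < M := by exact_mod_cast hM1
    -- continuous auxiliary maps
    have hg : Continuous fun q : ℝ × E => (1 - q.1) • x + q.2 :=
      ((continuous_const.sub continuous_fst).smul continuous_const).add continuous_snd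
    have hgp : (1 - p.1) • x + p.2 = x + p.2 := by rw [hp]; simp
    have hE2 : ∀ᶠ q : ℝ × E in 𝓝 p, (M : EReal) < φ ((1 - q.1) • x + q.2) := by
      have ht := hg.tendsto p
      simp only [hgp] at ht
      exact ht.eventually (hlsc (x + p.2) _ hM2)
    have hE4 : ∀ᶠ q : ℝ × E in 𝓝 p, ((c' + w : ℝ) : EReal) < φ (x + q.2) := by
      have ht : Filter.Tendsto (fun q : ℝ × E => x + q.2) (𝓝 p) (𝓝 (x + p.2)) :=
        (continuous_const.add continuous_snd).tendsto p
      exact ht.eventually (hlsc (x + p.2) _ hkey)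
    have hE1a : ∀ᶠ q : ℝ × E in 𝓝 p, q.1 < 1 :=
      (isOpen_lt continuous_fst continuous_const).eventually_mem (by rw [Set.mem_setOf_eq, hp]; norm_num)
    have hE1b : ∀ᶠ q : ℝ × E in 𝓝 p, (1 - q.1) * w < M - c' :=
      (isOpen_lt ((continuous_const.sub continuous_fst).mul continuous_const)
        continuous_const).eventually_mem (by rw [Set.mem_setOf_eq]; show (1 - p.1) * w < M - c'; rw [hp]; norm_num; linarith)
    filter_upwards [hE1a, hE1b, hE2, hE4] with q hq1 hqb hq2 hq4
    rcases lt_trichotomy q.1 0 with h | h | h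
    · rw [persp_neg h]
      exact lt_of_lt_of_le (lt_of_lt_of_le hc'1 (le_of_lt (EReal.coe_lt_top c'))) le_top
    · rw [persp_zero h]
      have h5 : (c' : EReal) < φ (x + q.2) - (w : EReal) := by
        rw [EReal.lt_sub_iff_add_lt (.inl (EReal.coe_ne_bot w)) (.inl (EReal.coe_ne_top w)),
          ← EReal.coe_add]
        exact hq4
      refine lt_trans hc'1 (lt_of_lt_of_le h5 ?_)
      rw [← hw]
      exact sub_le_recFn hx q.2
    · rw [persp_pos h]
      have hcv := hconv x (q.1⁻¹ • q.2) (1 - q.1) q.1 (by linarith) h.le (by ring)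
      have harg : (1 - q.1) • x + q.1 • (q.1⁻¹ • q.2) = (1 - q.1) • x + q.2 := by
        rw [smul_smul, mul_inv_cancel₀ h.ne', one_smul]
      rw [harg, hw, ← EReal.coe_mul] at hcv
      have h6 : (M : EReal) < (((1 - q.1) * w : ℝ) : EReal) + (q.1 : EReal) * φ (q.1⁻¹ • q.2) :=
        lt_of_lt_of_le hq2 hcv
      have h7 : ((M - (1 - q.1) * w : ℝ) : EReal) < (q.1 : EReal) * φ (q.1⁻¹ • q.2) := by
        rw [EReal.coe_sub, EReal.sub_lt_iff (.inl (EReal.coe_ne_bot _))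
          (.inl (EReal.coe_ne_top _))]
        rwa [add_comm] at h6
      have h8 : c' < M - (1 - q.1) * w := by linarith
      exact lt_trans hc'1 (lt_trans (EReal.coe_lt_coe_iff.2 h8) h7)
  · -- positive region
    rw [persp_pos hp] at hc
    obtain ⟨c', hc'1, hc'2⟩ := EReal.exists_between_coe_real hc
    obtain ⟨M, hM1, hM2⟩ := exists_real_pair hp hc'2
    have hcont : Filter.Tendsto (fun q : ℝ × E => q.1⁻¹ • q.2) (𝓝 p) (𝓝 (p.1⁻¹ • p.2)) :=
      ((continuousAt_fst.inv₀ hp.ne').smul continuousAt_snd)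
    have hE1 : ∀ᶠ q : ℝ × E in 𝓝 p, (M : EReal) < φ (q.1⁻¹ • q.2) :=
      hcont.eventually (hlsc _ _ hM1)
    have hE2 : ∀ᶠ q : ℝ × E in 𝓝 p, 0 < q.1 ∧ c' < q.1 * M := by
      refine Filter.Eventually.and ?_ ?_
      · exact (isOpen_lt continuous_const continuous_fst).eventually_mem hp
      · exact (isOpen_lt continuous_const (continuous_fst.mul continuous_const)).eventually_mem hM2
    filter_upwards [hE1, hE2] with q h1 h2
    obtain ⟨h2a, h2b⟩ := h2
    rw [persp_pos h2a]
    have h3 : ((q.1 * M : ℝ) : EReal) ≤ (q.1 : EReal) * φ (q.1⁻¹ • q.2) := by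
      rw [EReal.coe_mul]
      exact mul_le_mul_of_nonneg_left h1.le (EReal.coe_nonneg.2 h2a.le)
    exact lt_of_lt_of_le (lt_trans hc'1 (EReal.coe_lt_coe_iff.2 h2b)) h3


end LSC

end PerspAux

end PerspectiveAuxiliary

open PerspAux in
/-- composition of a perspective function with a continuous
affine operator `A : x ↦ (⟨x,u⟩ − ρ, Lx − r)` yields a function in `Γ₀(𝒣)`. -/
theorem perspective_comp_affine
    {H : Type*} [NormedAddCommGroup H] [InnerProductSpace ℝ H] [CompleteSpace H]
    {G : Type*} [NormedAddCommGroup G] [InnerProductSpace ℝ G] [CompleteSpace G]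
    (L : H →L[ℝ] G) (φ : G → EReal) (hφ : Gamma0 G φ)
    (r : G) (u : H) (ρ : ℝ)
    (f : H → EReal)
    (hf : f = fun x =>
      if ρ < (inner ℝ x u : ℝ) then
        (((inner ℝ x u : ℝ) - ρ : ℝ) : EReal) *
          φ (((inner ℝ x u : ℝ) - ρ)⁻¹ • (L x - r))
      else if (inner ℝ x u : ℝ) = ρ then recFn φ (L x - r)
      else ⊤)
    (hz : ∃ z : H, (∃ d : G, φ d ≠ ⊤ ∧ L z = r + ((inner ℝ z u : ℝ) - ρ) • d) ∧
      ρ ≤ (inner ℝ z u : ℝ))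
    (A : H → ℝ × G) (hA : A = fun x => ((inner ℝ x u : ℝ) - ρ, L x - r)) :
    (∀ x : H, f x = persp φ (A x)) ∧ Gamma0 H f := by
  obtain ⟨⟨hbφ, hsφ⟩, hlscφ, hconvφ⟩ := hφ
  have h1 : ∀ x : H, f x = persp φ (A x) := by
    intro x
    rw [hf, hA]
    simp only
    rcases lt_trichotomy ρ ((inner ℝ x u : ℝ)) with h | h | h
    · rw [if_pos h, persp_pos (by simpa using sub_pos.2 h)]
    · rw [if_neg (by rw [h]; exact lt_irrefl _), if_pos h.symm,
        persp_zero (by simpa using sub_eq_zero.2 h.symm)]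
    · rw [if_neg (by exact fun hcon => absurd (lt_trans h hcon) (lt_irrefl _)),
        if_neg (by exact fun hcon => absurd hcon (by rw [hcon]  at h; exact absurd h (lt_irrefl _))),
        persp_neg (by simpa using sub_neg.2 h)]
  refine ⟨h1, ⟨⟨fun x => by rw [h1 x]; exact persp_ne_bot hbφ ⟨_, hsφ.choose_spec⟩ _, ?_⟩, ?_, ?_⟩⟩
  · -- properness : f somewhere finite
    obtain ⟨z, ⟨d, hd, hLd⟩, hzρ⟩ := hz
    rcases hzρ.eq_or_lt with heq | hlt
    · refine ⟨z, ?_⟩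
      rw [h1 z, hA]
      simp only
      rw [persp_zero (by simpa using sub_eq_zero.2 heq.symm)]
      have : L z - r = (0 : G) := by
        rw [hLd, ← heq]
        simp
      rw [this, recFn_zero hbφ hsφ]
      simp
    · refine ⟨z, ?_⟩
      set η : ℝ := (inner ℝ z u : ℝ) - ρ with hη
      have hηpos : 0 < η := sub_pos.2 hlt
      rw [h1 z, hA]
      simp only
      rw [persp_pos (by simpa using hlt)]
      have hzr : L z - r = η • d := by rw [hLd]; abel
      have : (η⁻¹ : ℝ) • (L z - r) = d := by rw [hzr, smul_smul, inv_mul_cancel₀ hηpos.ne', one_smul]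
      rw [this]
      obtain ⟨w, hw⟩ := toReal_eq hd (hbφ d)
      rw [hw, ← EReal.coe_mul]
      exact EReal.coe_ne_top _
  · -- lower semicontinuity
    have hfc : f = persp φ ∘ A := funext h1
    have hAc : Continuous A := by
      rw [hA]
      exact ((continuous_id.inner continuous_const).sub continuous_const).prodMk
        (L.continuous.sub continuous_const)
    rw [hfc]
    exact (persp_lsc hbφ hsφ hlscφ hconvφ).comp hAc
  · -- convexity
    intro x y a b ha hb hab
    rw [h1, h1, h1]
    have hAaff : A (a • x + b • y) = a • A x + b • A y := by
      rw [hA]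
      simp only
      refine Prod.ext ?_ ?_
      · simp only [Prod.fst_add, Prod.smul_fst, smul_eq_mul]
        rw [inner_add_left, real_inner_smul_left, real_inner_smul_left]
        linear_combination ρ * hab
      · simp only [Prod.snd_add, Prod.smul_snd]
        rw [map_add, map_smul, map_smul, smul_sub, smul_sub]
        have hr : a • r + b • r = r := by rw [← add_smul, hab, one_smul]
        nth_rewrite 1 [← hr]
        abel
    rw [hAaff]
    exact persp_convex hbφ hsφ hconvφ (A x) (A y) a b ha hb hab

end
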